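/- arXiv:2002.02641 — 3 statements merged into one kernel-verified Lean document; each statement's English description precedes it below -/
import Mathlib

section
/- In the linear configuration G_m consisting of nodes a_1,...,a_m, b_1,...,b_{2m+1}, c_m,...,c_1 on a path (in this left-to-right order), where all a_i and c_i have wakeup tag 0 and all b_i have wakeup tag 1, any deterministic anonymous leader election algorithm requires at least m-1 rounds: for all local rounds t < m-1, the histories of nodes b_m, b_{m+1}, b_{m+2} are identical. -/
/-!
Histories on a path are computed locally: a node's history after round `t + 1` depends only on
its own history and the multiset of messages sent by its neighbours in round `t`. Two
consequences follow by induction on `t`. First, the tags of `G_m` are invariant under the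
reflection `i ↦ 4m - i` of the path, and so are the histories. Second, inside the block of
`b`-nodes (all tagged 1) a node whose distance to both ends of the block exceeds `t` has, after
`t` rounds, the same history as every other such node; for `t < m - 1` this covers the three
central nodes. A node singled out by a decision function must be fixed by the reflection, hence
be the centre `b_{m+1}`, but its neighbour `b_m` has the same history.
-/

namespace PathNetwork

variable {α Hist Msg : Type*} {n : ℕ}

def neighbors (v : Fin n) : Finset (Fin n) :=
  Finset.univ.filter fun u => v.val + 1 = u.val ∨ u.val + 1 = v.val

structure IsRun (init : α → Hist) (act : Hist → Option Msg)
    (step : Hist → Multiset Msg → Hist) (tag : Fin n → α) (H : ℕ → Fin n → Hist) : Prop where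
  zero : ∀ v, H 0 v = init (tag v)
  succ : ∀ r v, H (r + 1) v = step (H r v) ((neighbors v).val.filterMap fun u => act (H r u))

theorem neighbors_rev (v : Fin n) :
    neighbors v.rev = (neighbors v).map Fin.revPerm.toEmbedding := by
  ext u
  simp only [Finset.mem_map_equiv, Fin.revPerm_symm, Fin.revPerm_apply, neighbors,
    Finset.mem_filter, Finset.mem_univ, true_and, Fin.val_rev]
  omega

theorem neighbors_val_of_interior (v : Fin n) (hv₀ : 0 < v.val) (hv : v.val + 1 < n) :
    (neighbors v).val = {⟨v.val - 1, by omega⟩, ⟨v.val + 1, hv⟩} := by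
  have hpair : neighbors v = {⟨v.val - 1, by omega⟩, ⟨v.val + 1, hv⟩} := by
    ext u
    simp only [neighbors, Finset.mem_filter, Finset.mem_univ, true_and, Finset.mem_insert,
      Finset.mem_singleton, Fin.ext_iff]
    omega
  rw [hpair, Finset.insert_val_of_notMem (by simp [Fin.ext_iff]), Finset.singleton_val]
  rfl

theorem _root_.Multiset.filterMap_pair_congr {β : Type*} {f : α → Option β} {a b a' b' : α}
    (ha : f a = f a') (hb : f b = f b') :
    ({a, b} : Multiset α).filterMap f = ({a', b'} : Multiset α).filterMap f := by
  simp only [Multiset.insert_eq_cons, ← Multiset.cons_zero, Multiset.filterMap_cons, ha, hb]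

variable {init : α → Hist} {act : Hist → Option Msg} {step : Hist → Multiset Msg → Hist}
  {tag : Fin n → α} {H : ℕ → Fin n → Hist}

theorem IsRun.apply_rev (hH : IsRun init act step tag H) (htag : ∀ v, tag v.rev = tag v) :
    ∀ t v, H t v.rev = H t v
  | 0, v => by rw [hH.zero, hH.zero, htag]
  | t + 1, v => by
    rw [hH.succ, hH.succ, hH.apply_rev htag t v, neighbors_rev, Finset.map_val,
      Multiset.filterMap_map]
    congr 2
    funext u
    simp only [Function.comp_apply, Equiv.coe_toEmbedding, Fin.revPerm_apply,
      hH.apply_rev htag t u]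

theorem IsRun.apply_eq_of_tag_eq_on_Icc (hH : IsRun init act step tag H) {a b : ℕ} {c : α}
    (hb : b < n) (htag : ∀ v : Fin n, a ≤ v.val → v.val ≤ b → tag v = c) :
    ∀ t (i j : Fin n), a + t ≤ i.val → i.val + t ≤ b → a + t ≤ j.val → j.val + t ≤ b →
      H t i = H t j
  | 0, i, j, hi₁, hi₂, hj₁, hj₂ => by
    rw [hH.zero, hH.zero, htag i hi₁ hi₂, htag j hj₁ hj₂]
  | t + 1, i, j, hi₁, hi₂, hj₁, hj₂ => by
    have ih := hH.apply_eq_of_tag_eq_on_Icc hb htag t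
    rw [hH.succ, hH.succ, ih i j (by omega) (by omega) (by omega) (by omega),
      neighbors_val_of_interior i (by omega) (by omega),
      neighbors_val_of_interior j (by omega) (by omega)]
    refine congrArg _ <| Multiset.filterMap_pair_congr (congrArg act (ih _ _ ?_ ?_ ?_ ?_))
      (congrArg act (ih _ _ ?_ ?_ ?_ ?_)) <;> simp only <;> omega

end PathNetwork

theorem Fin.two_mul_val_add_one_of_rev_eq_self {n : ℕ} {v : Fin n} (hv : v.rev = v) :
    2 * v.val + 1 = n := by
  have := congrArg Fin.val hv
  rw [Fin.val_rev] at this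
  omega

/-- In the linear configuration `G_m`: a path of `4m+1` nodes `a_1,…,a_m, b_1,…,b_{2m+1},
c_m,…,c_1` (indices `0,…,4m`), where the `a_i` and `c_i` have wakeup tag 0 and the `b_i`
have wakeup tag 1, any deterministic anonymous synchronous algorithm satisfies: for all
rounds `t < m - 1` the histories of the three central nodes `b_m, b_{m+1}, b_{m+2}`
(indices `2m-1, 2m, 2m+1`) are identical, and hence no decision function can single out a
unique leader before round `m - 1`. -/
theorem stmt12 {Hist Msg : Type*} (m : ℕ) (hm : 2 ≤ m)
    (tag : Fin (4 * m + 1) → ℕ)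
    (htag : ∀ i, tag i = if m ≤ i.val ∧ i.val ≤ 3 * m then 1 else 0)
    (init : ℕ → Hist) (act : Hist → Option Msg) (step : Hist → Multiset Msg → Hist)
    (H : ℕ → Fin (4 * m + 1) → Hist)
    (hH0 : ∀ v, H 0 v = init (tag v))
    (hHs : ∀ r v, H (r + 1) v = step (H r v)
      (Multiset.filterMap (fun u => act (H r u))
        (Finset.univ.filter
          (fun u : Fin (4 * m + 1) => v.val + 1 = u.val ∨ u.val + 1 = v.val)).val)) :
    (∀ t, t < m - 1 →
      H t ⟨2 * m - 1, by omega⟩ = H t ⟨2 * m, by omega⟩ ∧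
      H t ⟨2 * m + 1, by omega⟩ = H t ⟨2 * m, by omega⟩) ∧
    ∀ t, t < m - 1 → ∀ f : Hist → Bool,
      ¬ ∃! v : Fin (4 * m + 1), f (H t v) = true := by
  have hH : PathNetwork.IsRun init act step tag H := ⟨hH0, hHs⟩
  have hrev : ∀ t v, H t v.rev = H t v := hH.apply_rev fun v => by
    simp only [htag, Fin.val_rev]
    split_ifs <;> omega
  have hblock := hH.apply_eq_of_tag_eq_on_Icc (a := m) (b := 3 * m) (c := 1) (by omega)
    fun v h₁ h₂ => by simp [htag, h₁, h₂]
  have hcentral : ∀ t, t < m - 1 →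
      H t ⟨2 * m - 1, by omega⟩ = H t ⟨2 * m, by omega⟩ ∧
      H t ⟨2 * m + 1, by omega⟩ = H t ⟨2 * m, by omega⟩ := by
    intro t ht
    refine ⟨hblock t _ _ ?_ ?_ ?_ ?_, hblock t _ _ ?_ ?_ ?_ ?_⟩ <;> simp only <;> omega
  refine ⟨hcentral, fun t ht f ⟨v, hv, huniq⟩ => ?_⟩
  have hv_centre : v.val = 2 * m := by
    have hv_fixed : v.rev = v := huniq v.rev (show f (H t v.rev) = true by rwa [hrev])
    have := Fin.two_mul_val_add_one_of_rev_eq_self hv_fixed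
    omega
  have hleft : f (H t ⟨2 * m - 1, by omega⟩) = true := by
    rwa [(hcentral t ht).1, show (⟨2 * m, by omega⟩ : Fin (4 * m + 1)) = v from
      Fin.ext hv_centre.symm]
  have hleft_eq : 2 * m - 1 = v.val := congrArg Fin.val (huniq _ hleft)
  omega
end

section
/- In a synchronous network where a node's history at round r can depend only on the initial data of nodes at graph distance at most r, two nodes whose r-neighbourhoods (with tags) are isomorphic via a tag-preserving isomorphism mapping one to the other have equal histories at round r. -/
/-!
Induct on the round `k`: for `k + n ≤ r`, the isomorphism `ψ` fixes the round-`k` history of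
every vertex at distance `≤ n` from `v`. Round `0` is the tag hypothesis. For round `k + 1`, a
vertex `x` at distance `≤ n` has all its neighbours at distance `≤ n + 1`, where the round-`k`
histories already agree, and `ψ` maps the neighbours of `x` bijectively onto those of `ψ x`
(injectivity and surjectivity of `ψ` on the balls of radius `r`), so `x` and `ψ x` receive the
same multiset of messages.
-/

namespace SimpleGraph

variable {V : Type*} (G : SimpleGraph V)

def closedBall (v : V) (r : ℕ) : Set V :=
  {x | ∃ p : G.Walk v x, p.length ≤ r}

variable {G}

theorem start_mem_closedBall (v : V) (r : ℕ) : v ∈ G.closedBall v r :=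
  ⟨.nil, Nat.zero_le r⟩

theorem closedBall_mono {v : V} {m n : ℕ} (h : m ≤ n) : G.closedBall v m ⊆ G.closedBall v n :=
  fun _ ⟨p, hp⟩ ↦ ⟨p, hp.trans h⟩

theorem mem_closedBall_succ_of_adj {v x y : V} {n : ℕ} (hx : x ∈ G.closedBall v n)
    (hxy : G.Adj x y) : y ∈ G.closedBall v (n + 1) := by
  obtain ⟨p, hp⟩ := hx
  exact ⟨p.concat hxy, by rw [Walk.length_concat]; omega⟩

theorem Walk.support_subset_closedBall {v x : V} (p : G.Walk v x) :
    ∀ u ∈ p.support, u ∈ G.closedBall v p.length := by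
  classical
  exact fun u hu ↦ ⟨p.takeUntil u hu, p.length_takeUntil_le_length hu⟩

theorem Walk.exists_walk_image {S : Set V} {ψ : V → V}
    (hadj : ∀ x ∈ S, ∀ y ∈ S, G.Adj x y → G.Adj (ψ x) (ψ y)) :
    ∀ {a b : V} (p : G.Walk a b), (∀ u ∈ p.support, u ∈ S) →
      ∃ q : G.Walk (ψ a) (ψ b), q.length = p.length
  | _, _, .nil, _ => ⟨.nil, rfl⟩
  | _, _, .cons h p, hS => by
    obtain ⟨q, hq⟩ := exists_walk_image hadj p fun u hu ↦ hS u (List.mem_cons_of_mem _ hu)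
    refine ⟨.cons (hadj _ (hS _ List.mem_cons_self) _ (hS _ ?_) h) q, by simp [hq]⟩
    exact List.mem_cons_of_mem _ p.start_mem_support

theorem mapsTo_closedBall {v w : V} {r n : ℕ} {ψ : V → V} (hψv : ψ v = w)
    (hadj : ∀ x ∈ G.closedBall v r, ∀ y ∈ G.closedBall v r, G.Adj x y → G.Adj (ψ x) (ψ y))
    (hn : n ≤ r) : Set.MapsTo ψ (G.closedBall v n) (G.closedBall w n) := by
  rintro x ⟨p, hp⟩
  have hsupp : ∀ u ∈ p.support, u ∈ G.closedBall v r := fun u hu ↦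
    closedBall_mono (hp.trans hn) (p.support_subset_closedBall u hu)
  obtain ⟨q, hq⟩ := Walk.exists_walk_image hadj p hsupp
  exact ⟨q.copy hψv rfl, by simpa [hq] using hp⟩

theorem neighborFinset_val_eq_map [Fintype V] [DecidableRel G.Adj] {S : Set V} {ψ : V → V}
    (hinj : Set.InjOn ψ S) (hadj : ∀ y ∈ S, ∀ z ∈ S, G.Adj y z ↔ G.Adj (ψ y) (ψ z))
    {x : V} (hx : x ∈ S) (hN : G.neighborSet x ⊆ S) (hN' : G.neighborSet (ψ x) ⊆ ψ '' S) :
    (G.neighborFinset (ψ x)).val = (G.neighborFinset x).val.map ψ := by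
  have hnodup : ((G.neighborFinset x).val.map ψ).Nodup :=
    Multiset.Nodup.map_on (fun y hy z hz ↦ hinj (hN (by simpa using hy)) (hN (by simpa using hz)))
      (G.neighborFinset x).nodup
  refine (Multiset.Nodup.ext (G.neighborFinset (ψ x)).nodup hnodup).2 fun y ↦ ?_
  simp only [Finset.mem_val, mem_neighborFinset, Multiset.mem_map]
  constructor
  · intro hy
    obtain ⟨u, hu, rfl⟩ := hN' hy
    exact ⟨u, (hadj x hx u hu).2 hy, rfl⟩
  · rintro ⟨u, hu, rfl⟩
    exact (hadj x hx u (hN hu)).1 hu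

end SimpleGraph

open SimpleGraph

section Protocol

variable {V Hist Msg : Type*} [Fintype V] {G : SimpleGraph V} [DecidableRel G.Adj]
  {t : V → ℕ} {init : ℕ → Hist} {act : Hist → Option Msg} {step : Hist → Multiset Msg → Hist}
  {H : ℕ → V → Hist}

theorem hist_comp_eq_of_mem_closedBall
    (hH0 : ∀ v, H 0 v = init (t v))
    (hHs : ∀ r v, H (r + 1) v =
      step (H r v) (Multiset.filterMap (fun u => act (H r u)) (G.neighborFinset v).val))
    {v w : V} {r : ℕ} {ψ : V → V} (hψv : ψ v = w)
    (hinj : Set.InjOn ψ (G.closedBall v r))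
    (hsurj : Set.SurjOn ψ (G.closedBall v r) (G.closedBall w r))
    (hadj : ∀ x ∈ G.closedBall v r, ∀ y ∈ G.closedBall v r, G.Adj x y ↔ G.Adj (ψ x) (ψ y))
    (htag : ∀ x ∈ G.closedBall v r, t (ψ x) = t x) :
    ∀ k n, k + n ≤ r → ∀ x ∈ G.closedBall v n, H k (ψ x) = H k x := by
  intro k
  induction k with
  | zero =>
    intro n hn x hx
    rw [hH0, hH0, htag x (closedBall_mono (by omega) hx)]
  | succ k ih =>
    intro n hkn x hx
    have hNx : G.neighborSet x ⊆ G.closedBall v r := fun u hu ↦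
      closedBall_mono (by omega) (mem_closedBall_succ_of_adj hx hu)
    have hψx : ψ x ∈ G.closedBall w n :=
      mapsTo_closedBall hψv (fun x hx y hy ↦ (hadj x hx y hy).1) (by omega) hx
    have hNψx : G.neighborSet (ψ x) ⊆ ψ '' G.closedBall v r := fun y hy ↦
      hsurj (closedBall_mono (by omega) (mem_closedBall_succ_of_adj hψx hy))
    have hmsgs : ∀ u ∈ (G.neighborFinset x).val, H k (ψ u) = H k u := fun u hu ↦
      ih (n + 1) (by omega) u (mem_closedBall_succ_of_adj hx (by simpa using hu))
    have hfilterMap : ∀ s : Multiset V, s.filterMap (fun u => act (H k u)) =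
        (s.map (H k)).filterMap act := fun s ↦ (Multiset.filterMap_map _ _ _).symm
    rw [hHs, hHs, ih n (by omega) x hx,
      neighborFinset_val_eq_map hinj hadj (closedBall_mono (by omega) hx) hNx hNψx,
      hfilterMap, hfilterMap, Multiset.map_map]
    congr 2
    exact Multiset.map_congr rfl hmsgs

end Protocol

theorem stmt13_general {V : Type*} [Fintype V]
    (G : SimpleGraph V) [DecidableRel G.Adj]
    {Hist Msg : Type*} (t : V → ℕ)
    (init : ℕ → Hist) (act : Hist → Option Msg) (step : Hist → Multiset Msg → Hist)
    (H : ℕ → V → Hist)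
    (hH0 : ∀ v, H 0 v = init (t v))
    (hHs : ∀ r v, H (r + 1) v =
      step (H r v) (Multiset.filterMap (fun u => act (H r u)) (G.neighborFinset v).val))
    (v w : V) (r : ℕ) (ψ : V → V)
    (hψv : ψ v = w)
    (hbij : Set.BijOn ψ {x | ∃ p : G.Walk v x, p.length ≤ r}
      {x | ∃ p : G.Walk w x, p.length ≤ r})
    (hadj : ∀ x y, (∃ p : G.Walk v x, p.length ≤ r) → (∃ p : G.Walk v y, p.length ≤ r) →
      (G.Adj x y ↔ G.Adj (ψ x) (ψ y)))
    (htag : ∀ x, (∃ p : G.Walk v x, p.length ≤ r) → t (ψ x) = t x) :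
    H r v = H r w := by
  have h := hist_comp_eq_of_mem_closedBall hH0 hHs hψv hbij.injOn hbij.surjOn
    (fun x hx y hy ↦ hadj x y hx hy) htag r 0 le_rfl v (start_mem_closedBall v 0)
  rw [hψv] at h
  exact h.symm

/-- Locality of synchronous anonymous computation: if `ψ` is a tag-preserving isomorphism
of the balls of radius `r` around `v` and around `w` (bijective on the balls, preserving
adjacency within the balls and the wakeup tags) with `ψ v = w`, then the histories of `v`
and `w` after `r` rounds coincide. -/
theorem stmt13 {V : Type*} [Fintype V] [DecidableEq V]
    (G : SimpleGraph V) [DecidableRel G.Adj]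
    {Hist Msg : Type*} (t : V → ℕ)
    (init : ℕ → Hist) (act : Hist → Option Msg) (step : Hist → Multiset Msg → Hist)
    (H : ℕ → V → Hist)
    (hH0 : ∀ v, H 0 v = init (t v))
    (hHs : ∀ r v, H (r + 1) v =
      step (H r v) (Multiset.filterMap (fun u => act (H r u)) (G.neighborFinset v).val))
    (v w : V) (r : ℕ) (ψ : V → V)
    (hψv : ψ v = w)
    (hbij : Set.BijOn ψ {x | ∃ p : G.Walk v x, p.length ≤ r}
      {x | ∃ p : G.Walk w x, p.length ≤ r})
    (hadj : ∀ x y, (∃ p : G.Walk v x, p.length ≤ r) → (∃ p : G.Walk v y, p.length ≤ r) →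
      (G.Adj x y ↔ G.Adj (ψ x) (ψ y)))
    (htag : ∀ x, (∃ p : G.Walk v x, p.length ≤ r) → t (ψ x) = t x) :
    H r v = H r w :=
  stmt13_general G t init act step H hH0 hHs v w r ψ hψv hbij hadj htag
end

section
/- There is no single deterministic anonymous algorithm U that elects a leader on all configurations H_m (m ≥ 1), where H_m is the 4-node path a—b—c—d with tags (m, 0, 0, m+1): for any U, if t is the first global round in which the tag-0 nodes transmit, then U fails to elect a leader on H_{t+1}. -/
/-!
Reversing the path, `v ↦ 3 - v`, is a fixed-point-free automorphism of `H_{t+1}` up to the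
wakeup tags `t + 1` and `t + 2` of the end nodes. These tags never matter: node `b` transmits in
round `t`, so node `a` is awake from round `t + 1` on, and once `a` is awake so is `d`, because the
execution stays symmetric. Hence, by induction on the round, every node has the same history as
its mirror image, and no decision on histories can single out one node.
-/

section Execution

variable {Msg V : Type*} [DecidableEq Msg]

/-- One round of the radio model at a single node: `none` means asleep, `m` is what the node hears
(the empty multiset is silence) and `tag` is its spontaneous wakeup round. -/
def nextHistory (tag r : ℕ) (m : Multiset Msg) (o : Option (List (Multiset Msg))) :
    Option (List (Multiset Msg)) :=
  o.elim (if m ≠ 0 then some [m] else if r = tag then some [0] else none) (fun h => some (m :: h))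

theorem isSome_nextHistory_of_isSome {tag r : ℕ} {m : Multiset Msg}
    {o : Option (List (Multiset Msg))} (ho : o.isSome) : (nextHistory tag r m o).isSome := by
  obtain ⟨h, rfl⟩ := Option.isSome_iff_exists.mp ho
  rfl

theorem isSome_nextHistory_of_ne_zero {tag r : ℕ} {m : Multiset Msg} (hm : m ≠ 0)
    (o : Option (List (Multiset Msg))) : (nextHistory tag r m o).isSome := by
  cases o <;> simp [nextHistory, hm]

variable {H : ℕ → V → Option (List (Multiset Msg))} {msgs : ℕ → V → Multiset Msg}
  {tag : V → ℕ}

theorem isSome_history_of_le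
    (hHs : ∀ r v, H (r + 1) v = nextHistory (tag v) r (msgs r v) (H r v))
    {v : V} {r s : ℕ} (hr : (H r v).isSome) (hrs : r ≤ s) : (H s v).isSome := by
  induction s, hrs using Nat.le_induction with
  | base => exact hr
  | succ s _ ih => rw [hHs]; exact isSome_nextHistory_of_isSome ih

theorem history_comp_eq
    (hH0 : ∀ v, H 0 v = none)
    (hHs : ∀ r v, H (r + 1) v = nextHistory (tag v) r (msgs r v) (H r v))
    {σ : V → V} (hmsgs : ∀ r, (∀ u, H r (σ u) = H r u) → ∀ v, msgs r (σ v) = msgs r v)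
    (htag : ∀ r v, H r v = none → H r (σ v) = none → (r = tag (σ v) ↔ r = tag v)) :
    ∀ r v, H r (σ v) = H r v := by
  intro r
  induction r with
  | zero => simp [hH0]
  | succ r ih =>
    intro v
    rw [hHs, hHs, ih v, hmsgs r ih v]
    cases hv : H r v with
    | some h => rfl
    | none => simp only [nextHistory, htag r v hv (by rw [ih v, hv])]

end Execution

theorem Multiset.filterMap_eq_of_map {α β : Type*} {σ : α → α} {F : α → Option β}
    (hF : ∀ u, F (σ u) = F u) {s t : Multiset α} (hst : s = t.map σ) :
    s.filterMap F = t.filterMap F := by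
  rw [hst, Multiset.filterMap_map]
  exact congrArg (Multiset.filterMap · t) (funext hF)

theorem Multiset.filterMap_ne_zero {α β : Type*} {F : α → Option β} {s : Multiset α} {a : α}
    {b : β} (ha : a ∈ s) (hb : F a = some b) : s.filterMap F ≠ 0 :=
  fun h => by simpa [h] using (Multiset.mem_filterMap F s).mpr ⟨a, ha, hb⟩

theorem not_existsUnique_of_invariant {α : Type*} {σ : α → α} (hσ : ∀ a, σ a ≠ a) {P : α → Prop}
    (hP : ∀ a, P a → P (σ a)) : ¬ ∃! a, P a := by
  rintro ⟨a, ha, huniq⟩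
  exact hσ a (huniq (σ a) (hP a ha))

def pathNbrs {n : ℕ} (v : Fin n) : Finset (Fin n) :=
  Finset.univ.filter (fun u : Fin n => v.val + 1 = u.val ∨ u.val + 1 = v.val)

theorem pathNbrs_rev {n : ℕ} (v : Fin n) :
    (pathNbrs v.rev).val = (pathNbrs v).val.map Fin.rev := by
  have : pathNbrs v.rev = (pathNbrs v).map Fin.revPerm.toEmbedding := by
    ext u
    rw [Finset.mem_map_equiv]
    simp only [pathNbrs, Finset.mem_filter, Finset.mem_univ, true_and, Fin.revPerm_symm,
      Fin.revPerm_apply, Fin.val_rev]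
    omega
  rw [this, Finset.map_val]
  rfl

theorem stmt15 {Msg : Type*} [DecidableEq Msg]
    (act : List (Multiset Msg) → Option Msg)
    (H : ℕ → ℕ → Fin 4 → Option (List (Multiset Msg)))
    (msgs : ℕ → ℕ → Fin 4 → Multiset Msg)
    (hmsgs : ∀ M r v, msgs M r v = Multiset.filterMap (fun u => (H M r u).bind act)
      (Finset.univ.filter (fun u : Fin 4 => v.val + 1 = u.val ∨ u.val + 1 = v.val)).val)
    (hH0 : ∀ M v, H M 0 v = none)
    (hHs : ∀ M r v, H M (r + 1) v =
      match H M r v with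
      | some h => some (msgs M r v :: h)
      | none =>
        if msgs M r v ≠ 0 then some [msgs M r v]
        else if r = (![M, 0, 0, M + 1] : Fin 4 → ℕ) v then some [(0 : Multiset Msg)]
        else none)
    (t : ℕ)
    (htrans : ∃ h, H (t + 1) t 1 = some h ∧ act h ≠ none) :
    ∀ (r : ℕ) (f : List (Multiset Msg) → Bool),
      ¬ ∃! v : Fin 4, ∃ h, H (t + 1) r v = some h ∧ f h = true := by
  have hstep : ∀ r v, H (t + 1) (r + 1) v =
      nextHistory (![t + 1, 0, 0, t + 1 + 1] v) r (msgs (t + 1) r v) (H (t + 1) r v) := by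
    intro r v
    rw [hHs]
    cases H (t + 1) r v <;> rfl
  obtain ⟨h₁, hh₁, hact⟩ := htrans
  obtain ⟨m, hm⟩ := Option.ne_none_iff_exists'.mp hact
  have hwake : (H (t + 1) (t + 1) 0).isSome := by
    rw [hstep, hmsgs]
    refine isSome_nextHistory_of_ne_zero ?_ _
    refine Multiset.filterMap_ne_zero (a := 1) (b := m) (by decide) ?_
    rw [hh₁, Option.bind_some, hm]
  have hasleep : ∀ r, H (t + 1) r 0 = none → r ≤ t := fun r h0 => by
    by_contra! hr
    simpa [h0] using isSome_history_of_le hstep hwake hr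
  have hsymm : ∀ r v, H (t + 1) r v.rev = H (t + 1) r v := by
    refine history_comp_eq (hH0 (t + 1)) hstep (fun r hr v => ?_) (fun r v hv hrv => ?_)
    · rw [hmsgs, hmsgs]
      exact Multiset.filterMap_eq_of_map (fun u => by rw [hr]) (pathNbrs_rev v)
    · fin_cases v
      · show r = t + 1 + 1 ↔ r = t + 1
        have := hasleep r hv; omega
      · exact Iff.rfl
      · exact Iff.rfl
      · show r = t + 1 ↔ r = t + 1 + 1
        have := hasleep r hrv; omega
  intro r f
  exact not_existsUnique_of_invariant (by decide) fun v ⟨h, hv, hf⟩ => ⟨h, (hsymm r v).trans hv, hf⟩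
end
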